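/- arXiv:1511.06050 — 5 statements merged into one kernel-verified Lean document; each statement's English description precedes it below -/
import Mathlib

section
/- Let q ≥ 3 be an odd prime power and let M ⊆ F_q \ {0} with |M| = (q−1)/2 and u+v ≠ 0 for all u,v ∈ M. Define the mixed graph G_q on vertex set P ∪ L (points and lines of the biaffine plane over F_q) with undirected edges those of B_q, and arcs [m,b] → [m,b+i] for i ∈ M and (x,y) → (x,y+j) for j ∈ −M. Then G_q has diameter 2. -/
/-- Incidence in the biaffine plane: the point `(x,y)` (as `Sum.inl`) lies on the
    line `[m,b]` (as `Sum.inr`) iff `y = m*x + b`; these are the undirected edges. -/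
def MEdge (F : Type*) [Field F] (u v : (F × F) ⊕ (F × F)) : Prop :=
  ∃ p l : F × F, ((u = Sum.inl p ∧ v = Sum.inr l) ∨ (u = Sum.inr l ∧ v = Sum.inl p)) ∧
    p.2 = l.1 * p.1 + l.2

/-- The arcs of G_q: `[m,b] → [m,b+i]` for `i ∈ M`, and `(x,y) → (x,y+j)` for `j ∈ -M`. -/
def MArc (F : Type*) [Field F] (M : Finset F) (u v : (F × F) ⊕ (F × F)) : Prop :=
  (∃ m b i : F, i ∈ M ∧ u = Sum.inr (m, b) ∧ v = Sum.inr (m, b + i)) ∨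
  (∃ x y j : F, -j ∈ M ∧ u = Sum.inl (x, y) ∧ v = Sum.inl (x, y + j))

lemma cover_lemma {F : Type*} [Field F] [Fintype F] [DecidableEq F]
    (q : ℕ) (hq : Fintype.card F = q) (hodd : Odd q)
    (M : Finset F) (h0 : (0 : F) ∉ M) (hcard : M.card = (q - 1) / 2)
    (hsum : ∀ u ∈ M, ∀ v ∈ M, u + v ≠ 0) :
    ∀ d : F, d ≠ 0 → d ∈ M ∨ -d ∈ M := by
  obtain ⟨k, hk⟩ := hodd
  have hk1 : (q - 1) / 2 = k := by omega
  set N : Finset F := M ∪ M.image (fun x => -x) with hN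
  have hdisj : Disjoint M (M.image (fun x => -x)) := by
    rw [Finset.disjoint_left]
    intro a ha hain
    obtain ⟨b, hb, hba⟩ := Finset.mem_image.mp hain
    exact hsum b hb a ha (by rw [← hba]; ring)
  have hNcard : N.card = q - 1 := by
    rw [hN, Finset.card_union_of_disjoint hdisj,
      Finset.card_image_of_injective _ neg_injective, hcard, hk1]
    omega
  have hsub : (Finset.univ.erase (0 : F)) ⊆ N := by
    have heq : N = Finset.univ.erase (0 : F) := by
      apply Finset.eq_of_subset_of_card_le
      · intro a ha
        rcases Finset.mem_union.mp ha with h | h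
        · exact Finset.mem_erase.mpr ⟨fun h' => h0 (h' ▸ h), Finset.mem_univ _⟩
        · obtain ⟨b, hb, hba⟩ := Finset.mem_image.mp h
          refine Finset.mem_erase.mpr ⟨fun h' => h0 ?_, Finset.mem_univ _⟩
          have : b = 0 := by rw [← neg_neg b, hba, h', neg_zero]
          exact this ▸ hb
      · rw [hNcard, Finset.card_erase_of_mem (Finset.mem_univ _), Finset.card_univ, hq]
    rw [heq]
  intro d hd
  have : d ∈ N := hsub (Finset.mem_erase.mpr ⟨hd, Finset.mem_univ _⟩)
  rcases Finset.mem_union.mp this with h | h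
  · exact Or.inl h
  · obtain ⟨b, hb, hba⟩ := Finset.mem_image.mp h
    exact Or.inr (by rw [← hba, neg_neg]; exact hb)

lemma sum_lemma {F : Type*} [Field F] [Fintype F] [DecidableEq F]
    (q : ℕ) (hq : Fintype.card F = q) (hodd : Odd q)
    (M : Finset F) (h0 : (0 : F) ∉ M) (hcard : M.card = (q - 1) / 2)
    (hsum : ∀ u ∈ M, ∀ v ∈ M, u + v ≠ 0) :
    ∀ a ∈ M, ∃ m₁ ∈ M, ∃ m₂ ∈ M, m₁ + m₂ = -a := by
  intro a ha
  by_cases h : ∃ m ∈ M, -a - m ∈ M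
  · obtain ⟨m, hm, hm'⟩ := h
    exact ⟨m, hm, -a - m, hm', by ring⟩
  · push_neg at h
    exfalso
    have himg : M.image (fun x => a + x) ⊆ M := by
      intro b hb
      obtain ⟨m, hm, hmb⟩ := Finset.mem_image.mp hb
      have hne : a + m ≠ 0 := hsum a ha m hm
      rcases cover_lemma q hq hodd M h0 hcard hsum (a + m) hne with h1 | h1
      · exact hmb ▸ h1
      · exact absurd (by rw [show -(a+m) = -a - m by ring] at h1; exact h1) (h m hm)
    have heq : M.image (fun x => a + x) = M :=
      Finset.eq_of_subset_of_card_le himg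
        (le_of_eq (Finset.card_image_of_injective _ (add_right_injective a)).symm)
    have : a ∈ M.image (fun x => a + x) := by rw [heq]; exact ha
    obtain ⟨m, hm, hma⟩ := Finset.mem_image.mp this
    have : m = 0 := by linear_combination hma
    exact h0 (this ▸ hm)

/-- The mixed graph G_q has diameter 2: between any two distinct vertices there is
    a mixed path (edges both ways, arcs forward) of length at most 2. -/
theorem Gq_diameter_two {F : Type*} [Field F] [Fintype F] [DecidableEq F]
    (q : ℕ) (hq : Fintype.card F = q) (hodd : Odd q) (hq3 : 3 ≤ q) (hpp : IsPrimePow q)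
    (M : Finset F) (h0 : (0 : F) ∉ M) (hcard : M.card = (q - 1) / 2)
    (hsum : ∀ u ∈ M, ∀ v ∈ M, u + v ≠ 0) :
    ∀ u v : (F × F) ⊕ (F × F), u ≠ v →
      (MEdge F u v ∨ MArc F M u v) ∨
      ∃ w, (MEdge F u w ∨ MArc F M u w) ∧ (MEdge F w v ∨ MArc F M w v) := by
  have cover := cover_lemma q hq hodd M h0 hcard hsum
  have sum2 := sum_lemma q hq hodd M h0 hcard hsum
  rintro (⟨x, y⟩ | ⟨m, b⟩) (⟨x', y'⟩ | ⟨m', b'⟩) huv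
  · -- point to point
    by_cases hx : x = x'
    · subst hx
      have hy : y' - y ≠ 0 := fun h => huv (by simp [show y = y' by linear_combination -h])
      rcases cover (y' - y) hy with hd | hd
      · -- y'-y ∈ M : two point-arcs
        obtain ⟨m₁, hm₁, m₂, hm₂, hs⟩ := sum2 _ hd
        refine Or.inr ⟨Sum.inl (x, y + -m₁), Or.inr (Or.inr ⟨x, y, -m₁, by simpa using hm₁, rfl, rfl⟩),
          Or.inr (Or.inr ⟨x, y + -m₁, -m₂, by simpa using hm₂, rfl, ?_⟩)⟩
        simp only [Sum.inl.injEq, Prod.mk.injEq]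
        exact ⟨trivial, by linear_combination hs⟩
      · -- direct point-arc
        refine Or.inl (Or.inr (Or.inr ⟨x, y, y' - y, hd, rfl, ?_⟩))
        simp only [Sum.inl.injEq, Prod.mk.injEq]
        exact ⟨trivial, by ring⟩
    · -- distinct x : line through both points
      have hxx : x' - x ≠ 0 := fun h => hx (by linear_combination -h)
      set m := (y' - y) / (x' - x) with hm
      refine Or.inr ⟨Sum.inr (m, y - m * x),
        Or.inl ⟨(x, y), (m, y - m * x), Or.inl ⟨rfl, rfl⟩, by ring⟩,
        Or.inl ⟨(x', y'), (m, y - m * x), Or.inr ⟨rfl, rfl⟩, ?_⟩⟩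
      show y' = m * x' + (y - m * x)
      rw [hm]; field_simp; ring
  · -- point to line
    by_cases hi : y = m' * x + b'
    · exact Or.inl (Or.inl ⟨(x, y), (m', b'), Or.inl ⟨rfl, rfl⟩, hi⟩)
    · have hj : m' * x + b' - y ≠ 0 := fun h => hi (by linear_combination -h)
      rcases cover _ hj with hd | hd
      · -- j ∈ M : edge to line (m', y - m'x) then line-arc
        refine Or.inr ⟨Sum.inr (m', y - m' * x),
          Or.inl ⟨(x, y), (m', y - m' * x), Or.inl ⟨rfl, rfl⟩, by ring⟩,
          Or.inr (Or.inl ⟨m', y - m' * x, m' * x + b' - y, hd, rfl, ?_⟩)⟩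
        simp only [Sum.inr.injEq, Prod.mk.injEq]
        exact ⟨trivial, by ring⟩
      · -- -j ∈ M : point-arc then edge
        refine Or.inr ⟨Sum.inl (x, y + (m' * x + b' - y)),
          Or.inr (Or.inr ⟨x, y, m' * x + b' - y, hd, rfl, rfl⟩),
          Or.inl ⟨(x, y + (m' * x + b' - y)), (m', b'), Or.inl ⟨rfl, rfl⟩, by ring⟩⟩
  · -- line to point
    by_cases hi : y' = m * x' + b
    · exact Or.inl (Or.inl ⟨(x', y'), (m, b), Or.inr ⟨rfl, rfl⟩, hi⟩)
    · have hd0 : y' - m * x' - b ≠ 0 := fun h => hi (by linear_combination h)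
      rcases cover _ hd0 with hd | hd
      · -- d ∈ M : line-arc then edge
        refine Or.inr ⟨Sum.inr (m, b + (y' - m * x' - b)),
          Or.inr (Or.inl ⟨m, b, y' - m * x' - b, hd, rfl, rfl⟩),
          Or.inl ⟨(x', y'), (m, b + (y' - m * x' - b)), Or.inr ⟨rfl, rfl⟩, by ring⟩⟩
      · -- -d ∈ M : edge to point (x', m x' + b) then point-arc
        refine Or.inr ⟨Sum.inl (x', m * x' + b),
          Or.inl ⟨(x', m * x' + b), (m, b), Or.inr ⟨rfl, rfl⟩, rfl⟩,
          Or.inr (Or.inr ⟨x', m * x' + b, y' - m * x' - b, hd, rfl, ?_⟩)⟩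
        simp only [Sum.inl.injEq, Prod.mk.injEq]
        exact ⟨trivial, by ring⟩
  · -- line to line
    by_cases hm : m = m'
    · subst hm
      have hb : b' - b ≠ 0 := fun h => huv (by simp [show b = b' by linear_combination -h])
      rcases cover (b' - b) hb with hd | hd
      · -- direct arc
        refine Or.inl (Or.inr (Or.inl ⟨m, b, b' - b, hd, rfl, ?_⟩))
        simp only [Sum.inr.injEq, Prod.mk.injEq]
        exact ⟨trivial, by ring⟩
      · -- two arcs
        obtain ⟨m₁, hm₁, m₂, hm₂, hs⟩ := sum2 _ hd
        refine Or.inr ⟨Sum.inr (m, b + m₁), Or.inr (Or.inl ⟨m, b, m₁, hm₁, rfl, rfl⟩),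
          Or.inr (Or.inl ⟨m, b + m₁, m₂, hm₂, rfl, ?_⟩)⟩
        simp only [Sum.inr.injEq, Prod.mk.injEq]
        exact ⟨trivial, by linear_combination -hs⟩
    · -- distinct slopes : intersection point
      have hmm : m - m' ≠ 0 := fun h => hm (by linear_combination h)
      set x := (b' - b) / (m - m') with hx
      refine Or.inr ⟨Sum.inl (x, m * x + b),
        Or.inl ⟨(x, m * x + b), (m, b), Or.inr ⟨rfl, rfl⟩, rfl⟩,
        Or.inl ⟨(x, m * x + b), (m', b'), Or.inl ⟨rfl, rfl⟩, ?_⟩⟩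
      show m * x + b = m' * x + b'
      rw [hx]; field_simp; ring
end

section
/- In the mixed graph G_q (q ≥ 3 an odd prime power), every vertex has undirected degree q, out-degree (q−1)/2, and in-degree (q−1)/2; hence G_q is a (z,r)-mixed regular graph with r = q, z = (q−1)/2, on 2q² vertices. -/
/-- G_q is a mixed regular graph on 2q² vertices with undirected degree q,
    out-degree (q-1)/2 and in-degree (q-1)/2. -/
theorem Gq_mixed_regular {F : Type*} [Field F] [Fintype F] [DecidableEq F]
    (q : ℕ) (hq : Fintype.card F = q) (hodd : Odd q) (hq3 : 3 ≤ q) (hpp : IsPrimePow q)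
    (M : Finset F) (h0 : (0 : F) ∉ M) (hcard : M.card = (q - 1) / 2)
    (hsum : ∀ u ∈ M, ∀ v ∈ M, u + v ≠ 0) :
    Nat.card ((F × F) ⊕ (F × F)) = 2 * q ^ 2 ∧
    (∀ v : (F × F) ⊕ (F × F), Nat.card {u // MEdge F v u} = q) ∧
    (∀ v : (F × F) ⊕ (F × F), Nat.card {u // MArc F M v u} = (q - 1) / 2) ∧
    (∀ v : (F × F) ⊕ (F × F), Nat.card {u // MArc F M u v} = (q - 1) / 2) := by
  have hMcard : Nat.card {i : F // i ∈ M} = (q - 1) / 2 := by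
    simp [Nat.card_eq_fintype_card, Fintype.card_coe, hcard]
  refine ⟨?_, ?_, ?_, ?_⟩
  · simp only [Nat.card_eq_fintype_card, Fintype.card_sum, Fintype.card_prod, hq]
    ring
  · rintro (⟨x, y⟩ | ⟨m, b⟩)
    · have hb : Function.Bijective
          (fun m : F => (⟨Sum.inr (m, y - m * x),
            ⟨(x, y), (m, y - m * x), Or.inl ⟨rfl, rfl⟩, by simp⟩⟩ :
            {u // MEdge F (Sum.inl (x, y)) u})) := by
        constructor
        · intro a a' h
          have := congrArg Subtype.val h
          simp at this
          tauto
        · rintro ⟨u, p, l, (⟨hp, hu⟩ | ⟨hp, hu⟩), heq⟩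
          · refine ⟨l.1, Subtype.ext ?_⟩
            cases Sum.inl.inj hp
            simp only [hu]
            congr 1
            have : l.2 = y - l.1 * x := by
              have := heq
              simp at this
              linear_combination -this
            exact Prod.ext rfl this.symm
          · exact absurd hp (by simp)
      rw [← Nat.card_congr (Equiv.ofBijective _ hb), Nat.card_eq_fintype_card, hq]
    · have hb : Function.Bijective
          (fun x : F => (⟨Sum.inl (x, m * x + b),
            ⟨(x, m * x + b), (m, b), Or.inr ⟨rfl, rfl⟩, rfl⟩⟩ :
            {u // MEdge F (Sum.inr (m, b)) u})) := by
        constructor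
        · intro a a' h
          have := congrArg Subtype.val h
          simp at this
          tauto
        · rintro ⟨u, p, l, (⟨hp, hu⟩ | ⟨hp, hu⟩), heq⟩
          · exact absurd hp (by simp)
          · refine ⟨p.1, Subtype.ext ?_⟩
            cases Sum.inr.inj hp
            simp only [hu]
            congr 1
            rw [show ((m, b) : F × F).1 * p.1 + ((m, b) : F × F).2 = m * p.1 + b from rfl] at heq
            rw [← heq]
      rw [← Nat.card_congr (Equiv.ofBijective _ hb), Nat.card_eq_fintype_card, hq]
  · rintro (⟨x, y⟩ | ⟨m, b⟩)
    · have hb : Function.Bijective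
          (fun i : {i : F // i ∈ M} => (⟨Sum.inl (x, y + (-i.1)),
            Or.inr ⟨x, y, -i.1, by simpa using i.2, rfl, rfl⟩⟩ :
            {u // MArc F M (Sum.inl (x, y)) u})) := by
        constructor
        · intro a a' h
          have := congrArg Subtype.val h
          simp at this
          exact Subtype.ext (by tauto)
        · rintro ⟨u, (⟨m', b', i, hi, hv, hu⟩ | ⟨x', y', j, hj, hv, hu⟩)⟩
          · exact absurd hv (by simp)
          · obtain ⟨hx, hy⟩ := Prod.mk.injEq .. ▸ Sum.inl.inj hv
            refine ⟨⟨-j, hj⟩, Subtype.ext ?_⟩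
            simp [hu, hx, hy]
      rw [← Nat.card_congr (Equiv.ofBijective _ hb), hMcard]
    · have hb : Function.Bijective
          (fun i : {i : F // i ∈ M} => (⟨Sum.inr (m, b + i.1),
            Or.inl ⟨m, b, i.1, i.2, rfl, rfl⟩⟩ :
            {u // MArc F M (Sum.inr (m, b)) u})) := by
        constructor
        · intro a a' h
          have := congrArg Subtype.val h
          simp at this
          exact Subtype.ext (by tauto)
        · rintro ⟨u, (⟨m', b', i, hi, hv, hu⟩ | ⟨x', y', j, hj, hv, hu⟩)⟩
          · obtain ⟨hm, hb'⟩ := Prod.mk.injEq .. ▸ Sum.inr.inj hv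
            refine ⟨⟨i, hi⟩, Subtype.ext ?_⟩
            simp [hu, hm, hb']
          · exact absurd hv (by simp)
      rw [← Nat.card_congr (Equiv.ofBijective _ hb), hMcard]
  · rintro (⟨x, y⟩ | ⟨m, b⟩)
    · have hb : Function.Bijective
          (fun i : {i : F // i ∈ M} => (⟨Sum.inl (x, y + i.1),
            Or.inr ⟨x, y + i.1, -i.1, by simpa using i.2, rfl, by rw [add_neg_cancel_right]⟩⟩ :
            {u // MArc F M u (Sum.inl (x, y))})) := by
        constructor
        · intro a a' h
          have := congrArg Subtype.val h
          simp at this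
          exact Subtype.ext (by tauto)
        · rintro ⟨u, (⟨m', b', i, hi, hu, hv⟩ | ⟨x', y', j, hj, hu, hv⟩)⟩
          · exact absurd hv (by simp)
          · obtain ⟨hx, hy⟩ := Prod.mk.injEq .. ▸ Sum.inl.inj hv
            refine ⟨⟨-j, hj⟩, Subtype.ext ?_⟩
            have : y' = y + -j := by linear_combination -hy
            simp [hu, hx, this]
      rw [← Nat.card_congr (Equiv.ofBijective _ hb), hMcard]
    · have hb : Function.Bijective
          (fun i : {i : F // i ∈ M} => (⟨Sum.inr (m, b - i.1),
            Or.inl ⟨m, b - i.1, i.1, i.2, rfl, by rw [sub_add_cancel]⟩⟩ :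
            {u // MArc F M u (Sum.inr (m, b))})) := by
        constructor
        · intro a a' h
          have := congrArg Subtype.val h
          simp at this
          exact Subtype.ext (by tauto)
        · rintro ⟨u, (⟨m', b', i, hi, hu, hv⟩ | ⟨x', y', j, hj, hu, hv⟩)⟩
          · obtain ⟨hm, hb'⟩ := Prod.mk.injEq .. ▸ Sum.inr.inj hv
            refine ⟨⟨i, hi⟩, Subtype.ext ?_⟩
            have : b' = b - i := by linear_combination -hb'
            simp [hu, hm, this]
          · exact absurd hv (by simp)
      rw [← Nat.card_congr (Equiv.ofBijective _ hb), hMcard]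
end

section
/- The map θ defined on the vertices of G_q by θ([m,b]) = (−m,−b) (line to point) and θ((x,y)) = [−x,−y] (point to line) is an automorphism of the mixed graph G_q: it preserves undirected adjacency and maps arcs to arcs. -/
/-- The map θ sending line [m,b] to point (-m,-b) and point (x,y) to line [-x,-y]. -/
def theta (F : Type*) [Field F] : (F × F) ⊕ (F × F) → (F × F) ⊕ (F × F)
  | .inl (x, y) => .inr (-x, -y)
  | .inr (m, b) => .inl (-m, -b)


lemma theta_invol (F : Type*) [Field F] : ∀ u, theta F (theta F u) = u := by
  rintro (⟨x, y⟩ | ⟨m, b⟩) <;> simp [theta]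

lemma edge_fwd (F : Type*) [Field F] (u v : (F × F) ⊕ (F × F)) (h : MEdge F u v) :
    MEdge F (theta F u) (theta F v) := by
  obtain ⟨p, l, hor, hinc⟩ := h
  refine ⟨(-l.1, -l.2), (-p.1, -p.2), ?_, by simp; linear_combination hinc⟩
  rcases hor with ⟨hu, hv⟩ | ⟨hu, hv⟩ <;> subst hu hv <;> [right; left] <;> simp [theta]

lemma arc_fwd (F : Type*) [Field F] (M : Finset F) (u v : (F × F) ⊕ (F × F))
    (h : MArc F M u v) : MArc F M (theta F u) (theta F v) := by
  rcases h with ⟨m, b, i, hi, hu, hv⟩ | ⟨x, y, j, hj, hu, hv⟩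
  · subst hu hv
    exact Or.inr ⟨-m, -b, -i, by simpa using hi, by simp [theta], by simp [theta]; ring⟩
  · subst hu hv
    exact Or.inl ⟨-x, -y, -j, hj, by simp [theta], by simp [theta]; ring⟩

/-- θ is an automorphism of the mixed graph G_q. -/
theorem theta_automorphism {F : Type*} [Field F] [Fintype F] [DecidableEq F]
    (q : ℕ) (hq : Fintype.card F = q) (hodd : Odd q) (hpp : IsPrimePow q)
    (M : Finset F) (h0 : (0 : F) ∉ M) (hcard : M.card = (q - 1) / 2)
    (hsum : ∀ u ∈ M, ∀ v ∈ M, u + v ≠ 0) :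
    Function.Bijective (theta F) ∧
    (∀ u v, MEdge F u v ↔ MEdge F (theta F u) (theta F v)) ∧
    (∀ u v, MArc F M u v ↔ MArc F M (theta F u) (theta F v)) := by
  refine ⟨Function.Involutive.bijective (theta_invol F), fun u v => ⟨edge_fwd F u v, fun h => ?_⟩,
    fun u v => ⟨arc_fwd F M u v, fun h => ?_⟩⟩
  · have := edge_fwd F _ _ h; rwa [theta_invol, theta_invol] at this
  · have := arc_fwd F M _ _ h; rwa [theta_invol, theta_invol] at this
end

section
/- The mixed graph G_q is vertex-transitive: for any two vertices u, v of G_q there is an automorphism of G_q sending u to v. -/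
section Aux

variable {F : Type*} [Field F]

/-- The duality `θ`. -/
def thetaMap (F : Type*) [Field F] : (F × F) ⊕ (F × F) → (F × F) ⊕ (F × F)
  | .inl (x, y) => .inr (-x, -y)
  | .inr (m, b) => .inl (-m, -b)

/-- The translation-type map `Ψ_{a,t}`. -/
def psiMap (F : Type*) [Field F] (a t : F) : (F × F) ⊕ (F × F) → (F × F) ⊕ (F × F)
  | .inl (x, y) => .inl (-x + a, y + t)
  | .inr (m, b) => .inr (-m, b + a * m + t)

lemma theta_theta (u : (F × F) ⊕ (F × F)) : thetaMap F (thetaMap F u) = u := by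
  rcases u with ⟨x, y⟩ | ⟨m, b⟩ <;> simp [thetaMap]

lemma psi_psi (a t : F) (u : (F × F) ⊕ (F × F)) :
    psiMap F a (-t) (psiMap F a t u) = u := by
  rcases u with ⟨x, y⟩ | ⟨m, b⟩ <;> simp [psiMap] <;> ring

lemma edge_theta {u v : (F × F) ⊕ (F × F)} (h : MEdge F u v) :
    MEdge F (thetaMap F u) (thetaMap F v) := by
  obtain ⟨⟨px, py⟩, ⟨lm, lb⟩, ⟨hu, hv⟩ | ⟨hu, hv⟩, hpl⟩ := h <;> subst hu <;> subst hv
  · exact ⟨(-lm, -lb), (-px, -py), Or.inr ⟨rfl, rfl⟩, by dsimp at hpl ⊢; linear_combination hpl⟩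
  · exact ⟨(-lm, -lb), (-px, -py), Or.inl ⟨rfl, rfl⟩, by dsimp at hpl ⊢; linear_combination hpl⟩

lemma edge_psi (a t : F) {u v : (F × F) ⊕ (F × F)} (h : MEdge F u v) :
    MEdge F (psiMap F a t u) (psiMap F a t v) := by
  obtain ⟨⟨px, py⟩, ⟨lm, lb⟩, ⟨hu, hv⟩ | ⟨hu, hv⟩, hpl⟩ := h <;> subst hu <;> subst hv
  · exact ⟨(-px + a, py + t), (-lm, lb + a * lm + t), Or.inl ⟨rfl, rfl⟩,
      by dsimp at hpl ⊢; rw [hpl]; ring⟩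
  · exact ⟨(-px + a, py + t), (-lm, lb + a * lm + t), Or.inr ⟨rfl, rfl⟩,
      by dsimp at hpl ⊢; rw [hpl]; ring⟩

lemma arc_theta (M : Finset F) {u v : (F × F) ⊕ (F × F)} (h : MArc F M u v) :
    MArc F M (thetaMap F u) (thetaMap F v) := by
  obtain ⟨m, b, i, hi, hu, hv⟩ | ⟨x, y, j, hj, hu, hv⟩ := h <;> subst hu <;> subst hv
  · exact Or.inr ⟨-m, -b, -i, by simpa using hi, rfl, by simp [thetaMap]; ring⟩
  · exact Or.inl ⟨-x, -y, -j, hj, rfl, by simp [thetaMap]; ring⟩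

lemma arc_psi (M : Finset F) (a t : F) {u v : (F × F) ⊕ (F × F)} (h : MArc F M u v) :
    MArc F M (psiMap F a t u) (psiMap F a t v) := by
  obtain ⟨m, b, i, hi, hu, hv⟩ | ⟨x, y, j, hj, hu, hv⟩ := h <;> subst hu <;> subst hv
  · exact Or.inl ⟨-m, b + a * m + t, i, hi, rfl, by simp [psiMap]; ring⟩
  · exact Or.inr ⟨-x + a, y + t, j, hj, rfl, by simp [psiMap]; ring⟩

/-- Property of being an automorphism of the mixed graph. -/
def Good (M : Finset F) (φ : (F × F) ⊕ (F × F) → (F × F) ⊕ (F × F)) : Prop :=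
  Function.Bijective φ ∧
  (∀ a b, MEdge F a b ↔ MEdge F (φ a) (φ b)) ∧
  (∀ a b, MArc F M a b ↔ MArc F M (φ a) (φ b))

lemma good_theta (M : Finset F) : Good M (thetaMap F) := by
  refine ⟨Function.bijective_iff_has_inverse.2
    ⟨thetaMap F, theta_theta, theta_theta⟩, fun a b => ?_, fun a b => ?_⟩
  · constructor
    · exact edge_theta
    · intro h
      have := edge_theta h
      rwa [theta_theta, theta_theta] at this
  · constructor
    · exact arc_theta M
    · intro h
      have := arc_theta M h
      rwa [theta_theta, theta_theta] at this

lemma good_psi (M : Finset F) (a t : F) : Good M (psiMap F a t) := by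
  refine ⟨Function.bijective_iff_has_inverse.2
    ⟨psiMap F a (-t), psi_psi a t, by intro u; have := psi_psi a (-t) u; simpa using this⟩,
    fun x y => ?_, fun x y => ?_⟩
  · constructor
    · exact edge_psi a t
    · intro h
      have := edge_psi a (-t) h
      rwa [psi_psi, psi_psi] at this
  · constructor
    · exact arc_psi M a t
    · intro h
      have := arc_psi M a (-t) h
      rwa [psi_psi, psi_psi] at this

lemma good_comp {M : Finset F} {φ ψ : (F × F) ⊕ (F × F) → (F × F) ⊕ (F × F)}
    (hφ : Good M φ) (hψ : Good M ψ) : Good M (φ ∘ ψ) :=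
  ⟨hφ.1.comp hψ.1,
   fun a b => (hψ.2.1 a b).trans (hφ.2.1 _ _),
   fun a b => (hψ.2.2 a b).trans (hφ.2.2 _ _)⟩

end Aux

/-- G_q is vertex-transitive: any vertex can be mapped to any other by an
    automorphism of the mixed graph. -/
theorem Gq_vertex_transitive {F : Type*} [Field F] [Fintype F] [DecidableEq F]
    (q : ℕ) (hq : Fintype.card F = q) (hodd : Odd q) (hpp : IsPrimePow q)
    (M : Finset F) (h0 : (0 : F) ∉ M) (hcard : M.card = (q - 1) / 2)
    (hsum : ∀ u ∈ M, ∀ v ∈ M, u + v ≠ 0) :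
    ∀ u v : (F × F) ⊕ (F × F),
      ∃ φ : (F × F) ⊕ (F × F) → (F × F) ⊕ (F × F),
        Function.Bijective φ ∧
        (∀ a b, MEdge F a b ↔ MEdge F (φ a) (φ b)) ∧
        (∀ a b, MArc F M a b ↔ MArc F M (φ a) (φ b)) ∧
        φ u = v := by
  rintro (⟨x, y⟩ | ⟨m, b⟩) (⟨x', y'⟩ | ⟨m', b'⟩)
  · -- point to point: Ψ_{x'+x, y'-y}
    obtain ⟨h1, h2, h3⟩ := good_psi (F := F) M (x' + x) (y' - y)
    exact ⟨_, h1, h2, h3, by simp [psiMap, Prod.ext_iff] <;> ring⟩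
  · -- point to line: θ ∘ Ψ_{x - m', -y - b'}
    obtain ⟨h1, h2, h3⟩ :=
      good_comp (good_theta (F := F) M) (good_psi (F := F) M (x - m') (-y - b'))
    exact ⟨_, h1, h2, h3, by simp [psiMap, thetaMap, Prod.ext_iff] <;> ring⟩
  · -- line to point: Ψ_{x' - m, y' + b} ∘ θ
    obtain ⟨h1, h2, h3⟩ :=
      good_comp (good_psi (F := F) M (x' - m) (y' + b)) (good_theta (F := F) M)
    exact ⟨_, h1, h2, h3, by simp [psiMap, thetaMap, Prod.ext_iff] <;> ring⟩
  · -- line to line: θ ∘ Ψ_{-m' - m, b - b'} ∘ θ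
    obtain ⟨h1, h2, h3⟩ :=
      good_comp (good_theta (F := F) M)
        (good_comp (good_psi (F := F) M (-m' - m) (b - b')) (good_theta (F := F) M))
    exact ⟨_, h1, h2, h3, by simp [psiMap, thetaMap, Prod.ext_iff] <;> ring⟩
end

section
/- Let q ≥ 3 be an odd prime power, t a natural number with 2t ≤ (q−1)/2 and such that a suitable partition exists; form G_{q,t} from G_q by choosing T ⊆ M with |T| = 2t, writing T ∪ (−T) as T₁ ∪ T₂ with each T_i closed under negation and |T₁| = |T₂| = 2t, replacing the arcs with labels in T₁ on lines by undirected edges [m,b] ~ [m,b+i] for i ∈ T₁, and adding undirected edges (x,y) ~ (x,y+j) for j ∈ T₂ while removing the corresponding arcs. Then G_{q,t} has diameter 2, undirected degree q + 2t, and directed degree (q−1)/2 − 2t. -/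
/-- Undirected edges of G_{q,t}: the incidence edges of B_q together with
    [m,b] ~ [m,b+i] for i ∈ T₁ and (x,y) ~ (x,y+j) for j ∈ T₂. -/
def GtEdge (F : Type*) [Field F] (T1 T2 : Finset F)
    (u v : (F × F) ⊕ (F × F)) : Prop :=
  (∃ p l : F × F, ((u = Sum.inl p ∧ v = Sum.inr l) ∨ (u = Sum.inr l ∧ v = Sum.inl p)) ∧
      p.2 = l.1 * p.1 + l.2) ∨
  (∃ m b i : F, i ∈ T1 ∧ u = Sum.inr (m, b) ∧ v = Sum.inr (m, b + i)) ∨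
  (∃ x y j : F, j ∈ T2 ∧ u = Sum.inl (x, y) ∧ v = Sum.inl (x, y + j))

/-- Arcs of G_{q,t}: [m,b] → [m,b+i] for i ∈ S and (x,y) → (x,y+j) for j ∈ -S. -/
def GtArc (F : Type*) [Field F] (S : Finset F) (u v : (F × F) ⊕ (F × F)) : Prop :=
  (∃ m b i : F, i ∈ S ∧ u = Sum.inr (m, b) ∧ v = Sum.inr (m, b + i)) ∨
  (∃ x y j : F, -j ∈ S ∧ u = Sum.inl (x, y) ∧ v = Sum.inl (x, y + j))

/-- The mixed graph G_{q,t} has diameter 2, undirected degree q + 2t and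
    directed (out-)degree (q-1)/2 - 2t. -/
theorem Gqt_diameter_two_and_degrees {F : Type*} [Field F] [Fintype F] [DecidableEq F]
    (q : ℕ) (hq : Fintype.card F = q) (hodd : Odd q) (hq3 : 3 ≤ q) (hpp : IsPrimePow q)
    (M : Finset F) (h0 : (0 : F) ∉ M) (hMcard : M.card = (q - 1) / 2)
    (hsum : ∀ u ∈ M, ∀ v ∈ M, u + v ≠ 0)
    (t : ℕ) (ht : 2 * t ≤ (q - 1) / 2)
    (T : Finset F) (hTM : T ⊆ M) (hTcard : T.card = 2 * t)
    (T1 T2 : Finset F) (hd12 : Disjoint T1 T2)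
    (hT12 : T1 ∪ T2 = T ∪ T.image (fun s => -s))
    (hT1neg : ∀ s ∈ T1, -s ∈ T1) (hT2neg : ∀ s ∈ T2, -s ∈ T2)
    (hT1card : T1.card = 2 * t) (hT2card : T2.card = 2 * t) :
    (∀ u v : (F × F) ⊕ (F × F), u ≠ v →
      (GtEdge F T1 T2 u v ∨ GtArc F (M \ T) u v) ∨
      ∃ w, (GtEdge F T1 T2 u w ∨ GtArc F (M \ T) u w) ∧
           (GtEdge F T1 T2 w v ∨ GtArc F (M \ T) w v)) ∧
    (∀ v : (F × F) ⊕ (F × F), Nat.card {u // GtEdge F T1 T2 v u} = q + 2 * t) ∧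
    (∀ v : (F × F) ⊕ (F × F), Nat.card {u // GtArc F (M \ T) v u} = (q - 1) / 2 - 2 * t) := by
  classical
  set S : Finset F := M \ T with hSdef
  have hq1 : 2 * ((q - 1) / 2) = q - 1 := by
    obtain ⟨k, hk⟩ := hodd; omega
  have h0S : (0 : F) ∉ S := fun h => h0 (Finset.mem_sdiff.mp h).1
  have hScard : S.card = (q - 1) / 2 - 2 * t := by
    rw [hSdef, Finset.card_sdiff_of_subset hTM, hMcard, hTcard]
  -- membership in T1 ∪ T2 means membership in T ∪ (-T)
  have hmemTT : ∀ a : F, (a ∈ T1 ∨ a ∈ T2) → a ∈ T ∨ -a ∈ T := by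
    intro a ha
    have h1 : a ∈ T1 ∪ T2 := Finset.mem_union.mpr ha
    rw [hT12] at h1
    rcases Finset.mem_union.mp h1 with h | h
    · exact Or.inl h
    · obtain ⟨s, hs, rfl⟩ := Finset.mem_image.mp h
      exact Or.inr (by simpa using hs)
  have hmemTT' : ∀ a : F, a ∈ T ∨ -a ∈ T → a ∈ T1 ∪ T2 := by
    intro a ha
    rw [hT12, Finset.mem_union]
    rcases ha with h | h
    · exact Or.inl h
    · exact Or.inr (Finset.mem_image.mpr ⟨-a, h, by ring⟩)
  -- M and -M are disjoint
  have hMneg : ∀ a : F, a ∈ M → -a ∈ M → False := by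
    intro a ha hb
    exact hsum a ha (-a) hb (by ring)
  have h0T1 : (0 : F) ∉ T1 := by
    intro h
    rcases hmemTT 0 (Or.inl h) with h' | h'
    · exact h0 (hTM h')
    · exact h0 (hTM (by simpa using h'))
  have h0T2 : (0 : F) ∉ T2 := by
    intro h
    rcases hmemTT 0 (Or.inr h) with h' | h'
    · exact h0 (hTM h')
    · exact h0 (hTM (by simpa using h'))
  -- every nonzero element is in M or -M
  have hcover0 : ∀ j : F, j ≠ 0 → j ∈ M ∨ -j ∈ M := by
    intro j hj
    have hdisj : Disjoint M (M.image fun s => -s) := by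
      rw [Finset.disjoint_left]
      intro a ha hb
      obtain ⟨b, hb', hab⟩ := Finset.mem_image.mp hb
      exact hMneg b hb' (by rw [hab]; exact ha)
    have hsub : M ∪ M.image (fun s => -s) ⊆ Finset.univ.erase 0 := by
      intro a ha
      refine Finset.mem_erase.mpr ⟨?_, Finset.mem_univ _⟩
      rcases Finset.mem_union.mp ha with h | h
      · exact fun h0' => h0 (h0' ▸ h)
      · obtain ⟨b, hb, rfl⟩ := Finset.mem_image.mp h
        intro h0'
        exact h0 (by simpa [neg_eq_zero.mp h0'] using hb)
    have hcards : (M ∪ M.image (fun s => -s)).card = q - 1 := by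
      rw [Finset.card_union_of_disjoint hdisj,
        Finset.card_image_of_injective _ neg_injective, hMcard]
      omega
    have hcarde : (Finset.univ.erase (0 : F)).card = q - 1 := by
      rw [Finset.card_erase_of_mem (Finset.mem_univ _), Finset.card_univ, hq]
    have heq : M ∪ M.image (fun s => -s) = Finset.univ.erase 0 :=
      Finset.eq_of_subset_of_card_le hsub (by omega)
    have hjmem : j ∈ M ∪ M.image (fun s => -s) := by
      rw [heq]; exact Finset.mem_erase.mpr ⟨hj, Finset.mem_univ _⟩
    rcases Finset.mem_union.mp hjmem with h | h
    · exact Or.inl h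
    · obtain ⟨b, hb, rfl⟩ := Finset.mem_image.mp h
      exact Or.inr (by simpa using hb)
  -- the two step sets
  set A : Finset F := T2 ∪ S.image (fun s => -s) with hAdef
  set B : Finset F := T1 ∪ S with hBdef
  have h0A : (0 : F) ∉ A := by
    rw [hAdef, Finset.mem_union]
    rintro (h | h)
    · exact h0T2 h
    · obtain ⟨b, hb, hb0⟩ := Finset.mem_image.mp h
      exact h0S (neg_eq_zero.mp hb0 ▸ hb)
  have h0B : (0 : F) ∉ B := by
    rw [hBdef, Finset.mem_union]
    rintro (h | h)
    · exact h0T1 h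
    · exact h0S h
  have hdA : Disjoint T2 (S.image fun s => -s) := by
    rw [Finset.disjoint_left]
    intro a ha hb
    obtain ⟨b, hb', rfl⟩ := Finset.mem_image.mp hb
    have hbM : b ∈ M := (Finset.mem_sdiff.mp hb').1
    have hbT : b ∉ T := (Finset.mem_sdiff.mp hb').2
    rcases hmemTT (-b) (Or.inr ha) with h | h
    · exact hMneg (-b) (hTM h) (by simpa using hbM)
    · exact hbT (by simpa using h)
  have hdB : Disjoint T1 S := by
    rw [Finset.disjoint_left]
    intro a ha hb
    have haM : a ∈ M := (Finset.mem_sdiff.mp hb).1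
    have haT : a ∉ T := (Finset.mem_sdiff.mp hb).2
    rcases hmemTT a (Or.inl ha) with h | h
    · exact haT h
    · exact hMneg a haM (hTM h)
  have hAcard : A.card = (q - 1) / 2 := by
    rw [hAdef, Finset.card_union_of_disjoint hdA,
      Finset.card_image_of_injective _ neg_injective, hT2card, hScard]
    omega
  have hBcard : B.card = (q - 1) / 2 := by
    rw [hBdef, Finset.card_union_of_disjoint hdB, hT1card, hScard]
    omega
  -- every nonzero element is a legal point-step or a legal line-step
  have hcover : ∀ j : F, j ≠ 0 → j ∈ A ∨ j ∈ B := by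
    intro j hj
    rcases hcover0 j hj with h | h
    · by_cases hT' : j ∈ T
      · rcases Finset.mem_union.mp (hmemTT' j (Or.inl hT')) with h1 | h1
        · exact Or.inr (Finset.mem_union.mpr (Or.inl h1))
        · exact Or.inl (Finset.mem_union.mpr (Or.inl h1))
      · exact Or.inr (Finset.mem_union.mpr (Or.inr (Finset.mem_sdiff.mpr ⟨h, hT'⟩)))
    · by_cases hT' : -j ∈ T
      · rcases Finset.mem_union.mp (hmemTT' j (Or.inr hT')) with h1 | h1
        · exact Or.inr (Finset.mem_union.mpr (Or.inl h1))
        · exact Or.inl (Finset.mem_union.mpr (Or.inl h1))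
      · refine Or.inl (Finset.mem_union.mpr (Or.inr ?_))
        exact Finset.mem_image.mpr ⟨-j, Finset.mem_sdiff.mpr ⟨h, hT'⟩, by ring⟩
  -- the sum-decomposition lemma
  have hsum2 : ∀ C : Finset F, (0 : F) ∉ C → C.card = (q - 1) / 2 →
      ∀ d : F, d ≠ 0 → d ∉ C → ∃ a ∈ C, d - a ∈ C := by
    intro C hC0 hCc d hd hdC
    by_contra hcon
    push_neg at hcon
    have hdisj : Disjoint C (C.image fun a => d - a) := by
      rw [Finset.disjoint_right]
      intro b hb hbC
      obtain ⟨a, ha, rfl⟩ := Finset.mem_image.mp hb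
      exact hcon a ha hbC
    have hinj : Function.Injective fun a : F => d - a := by
      intro a b h; simpa using h
    have hsub : C ∪ C.image (fun a => d - a) ⊆ (Finset.univ.erase d).erase 0 := by
      intro a ha
      refine Finset.mem_erase.mpr ⟨?_, Finset.mem_erase.mpr ⟨?_, Finset.mem_univ _⟩⟩
      · rcases Finset.mem_union.mp ha with h | h
        · exact fun h' => hC0 (h' ▸ h)
        · obtain ⟨c, hc, rfl⟩ := Finset.mem_image.mp h
          intro h'
          exact hdC (by rw [sub_eq_zero.mp h']; exact hc)
      · rcases Finset.mem_union.mp ha with h | h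
        · exact fun h' => hdC (h' ▸ h)
        · obtain ⟨c, hc, rfl⟩ := Finset.mem_image.mp h
          intro h'
          exact hC0 (sub_eq_self.mp h' ▸ hc)
    have hc1 : (C ∪ C.image (fun a => d - a)).card = q - 1 := by
      rw [Finset.card_union_of_disjoint hdisj, Finset.card_image_of_injective _ hinj, hCc]
      omega
    have hc2 : ((Finset.univ.erase d).erase (0 : F)).card = q - 2 := by
      have h0d : (0 : F) ∈ Finset.univ.erase d :=
        Finset.mem_erase.mpr ⟨Ne.symm hd, Finset.mem_univ _⟩
      rw [Finset.card_erase_of_mem h0d, Finset.card_erase_of_mem (Finset.mem_univ _),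
        Finset.card_univ, hq]
      omega
    have := Finset.card_le_card hsub
    omega
  -- step lemmas
  have ptstep : ∀ x y j : F, j ∈ A →
      GtEdge F T1 T2 (Sum.inl (x, y)) (Sum.inl (x, y + j)) ∨
      GtArc F S (Sum.inl (x, y)) (Sum.inl (x, y + j)) := by
    intro x y j hj
    rcases Finset.mem_union.mp hj with h | h
    · exact Or.inl (Or.inr (Or.inr ⟨x, y, j, h, rfl, rfl⟩))
    · obtain ⟨s, hs, rfl⟩ := Finset.mem_image.mp h
      exact Or.inr (Or.inr ⟨x, y, -s, by simpa using hs, rfl, rfl⟩)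
  have linestep : ∀ m b i : F, i ∈ B →
      GtEdge F T1 T2 (Sum.inr (m, b)) (Sum.inr (m, b + i)) ∨
      GtArc F S (Sum.inr (m, b)) (Sum.inr (m, b + i)) := by
    intro m b i hi
    rcases Finset.mem_union.mp hi with h | h
    · exact Or.inl (Or.inr (Or.inl ⟨m, b, i, h, rfl, rfl⟩))
    · exact Or.inr (Or.inl ⟨m, b, i, h, rfl, rfl⟩)
  have inc1 : ∀ x y m b : F, y = m * x + b →
      GtEdge F T1 T2 (Sum.inl (x, y)) (Sum.inr (m, b)) := by
    intro x y m b h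
    exact Or.inl ⟨(x, y), (m, b), Or.inl ⟨rfl, rfl⟩, h⟩
  have inc2 : ∀ x y m b : F, y = m * x + b →
      GtEdge F T1 T2 (Sum.inr (m, b)) (Sum.inl (x, y)) := by
    intro x y m b h
    exact Or.inl ⟨(x, y), (m, b), Or.inr ⟨rfl, rfl⟩, h⟩
  refine ⟨?_, ?_, ?_⟩
  · -- diameter 2
    rintro (⟨x1, y1⟩ | ⟨m1, b1⟩) (⟨x2, y2⟩ | ⟨m2, b2⟩) hne
    · -- point to point
      by_cases hx : x1 = x2
      · subst hx
        have hd : y2 - y1 ≠ 0 := by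
          intro h
          exact hne (by rw [sub_eq_zero.mp h])
        by_cases hA' : y2 - y1 ∈ A
        · left
          have := ptstep x1 y1 (y2 - y1) hA'
          rwa [show y1 + (y2 - y1) = y2 by ring] at this
        · obtain ⟨a, ha, ha2⟩ := hsum2 A h0A hAcard _ hd hA'
          refine Or.inr ⟨Sum.inl (x1, y1 + a), ptstep x1 y1 a ha, ?_⟩
          have := ptstep x1 (y1 + a) (y2 - y1 - a) ha2
          rwa [show y1 + a + (y2 - y1 - a) = y2 by ring] at this
      · have hxx : x1 - x2 ≠ 0 := sub_ne_zero.mpr hx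
        set m : F := (y1 - y2) / (x1 - x2) with hm
        refine Or.inr ⟨Sum.inr (m, y1 - m * x1),
          Or.inl (inc1 x1 y1 m (y1 - m * x1) (by ring)), Or.inl (inc2 x2 y2 m (y1 - m * x1) ?_)⟩
        rw [hm]
        field_simp
        ring
    · -- point to line
      by_cases hinc : y1 = m2 * x1 + b2
      · exact Or.inl (Or.inl (inc1 x1 y1 m2 b2 hinc))
      · have hj : m2 * x1 + b2 - y1 ≠ 0 := by
          intro h; exact hinc (sub_eq_zero.mp h).symm
        rcases hcover _ hj with h | h
        · refine Or.inr ⟨Sum.inl (x1, y1 + (m2 * x1 + b2 - y1)), ptstep x1 y1 _ h,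
            Or.inl (inc1 x1 (y1 + (m2 * x1 + b2 - y1)) m2 b2 (by ring))⟩
        · refine Or.inr ⟨Sum.inr (m2, y1 - m2 * x1),
            Or.inl (inc1 x1 y1 m2 (y1 - m2 * x1) (by ring)), ?_⟩
          have := linestep m2 (y1 - m2 * x1) (m2 * x1 + b2 - y1) h
          rwa [show y1 - m2 * x1 + (m2 * x1 + b2 - y1) = b2 by ring] at this
    · -- line to point
      by_cases hinc : y2 = m1 * x2 + b1
      · exact Or.inl (Or.inl (inc2 x2 y2 m1 b1 hinc))
      · have hj : y2 - (m1 * x2 + b1) ≠ 0 := by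
          intro h; exact hinc (sub_eq_zero.mp h)
        rcases hcover _ hj with h | h
        · refine Or.inr ⟨Sum.inl (x2, m1 * x2 + b1),
            Or.inl (inc2 x2 (m1 * x2 + b1) m1 b1 rfl), ?_⟩
          have := ptstep x2 (m1 * x2 + b1) (y2 - (m1 * x2 + b1)) h
          rwa [show m1 * x2 + b1 + (y2 - (m1 * x2 + b1)) = y2 by ring] at this
        · refine Or.inr ⟨Sum.inr (m1, b1 + (y2 - (m1 * x2 + b1))),
            linestep m1 b1 _ h, Or.inl (inc2 x2 y2 m1 _ (by ring))⟩
    · -- line to line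
      by_cases hm : m1 = m2
      · subst hm
        have hd : b2 - b1 ≠ 0 := by
          intro h
          exact hne (by rw [sub_eq_zero.mp h])
        by_cases hB' : b2 - b1 ∈ B
        · left
          have := linestep m1 b1 (b2 - b1) hB'
          rwa [show b1 + (b2 - b1) = b2 by ring] at this
        · obtain ⟨a, ha, ha2⟩ := hsum2 B h0B hBcard _ hd hB'
          refine Or.inr ⟨Sum.inr (m1, b1 + a), linestep m1 b1 a ha, ?_⟩
          have := linestep m1 (b1 + a) (b2 - b1 - a) ha2
          rwa [show b1 + a + (b2 - b1 - a) = b2 by ring] at this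
      · have hmm : m1 - m2 ≠ 0 := sub_ne_zero.mpr hm
        set x : F := (b2 - b1) / (m1 - m2) with hxdef
        refine Or.inr ⟨Sum.inl (x, m1 * x + b1),
          Or.inl (inc2 x (m1 * x + b1) m1 b1 rfl), Or.inl (inc1 x (m1 * x + b1) m2 b2 ?_)⟩
        rw [hxdef]
        field_simp
        ring
  · -- undirected degree
    rintro (⟨x, y⟩ | ⟨m, b⟩)
    · have hiff : ∀ u : (F × F) ⊕ (F × F), GtEdge F T1 T2 (Sum.inl (x, y)) u ↔
          u ∈ (Finset.univ.image fun m : F => (Sum.inr (m, y - m * x) : (F × F) ⊕ (F × F))) ∪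
            T2.image fun j => Sum.inl (x, y + j) := by
        intro u
        constructor
        · rintro (⟨⟨px, py⟩, ⟨lm, lb⟩, (⟨hv, hu⟩ | ⟨hv, hu⟩), hpl⟩ | ⟨m', b', i, hi, hv, hu⟩ |
            ⟨x', y', j, hj, hv, hu⟩)
          · simp only [Sum.inl.injEq, Prod.mk.injEq] at hv
            obtain ⟨rfl, rfl⟩ := hv
            have hpl' : y = lm * x + lb := hpl
            refine Finset.mem_union.mpr (Or.inl (Finset.mem_image.mpr ⟨lm, Finset.mem_univ _, ?_⟩))
            rw [hu]
            simp only [Sum.inr.injEq, Prod.mk.injEq]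
            refine ⟨trivial, ?_⟩ <;> first
              | exact ⟨rfl, by rw [hpl']; ring⟩
              | (rw [hpl']; ring)
          · exact absurd hv (by simp)
          · exact absurd hv (by simp)
          · simp only [Sum.inl.injEq, Prod.mk.injEq] at hv
            obtain ⟨rfl, rfl⟩ := hv
            exact Finset.mem_union.mpr (Or.inr (Finset.mem_image.mpr ⟨j, hj, hu.symm⟩))
        · intro hu
          rcases Finset.mem_union.mp hu with h | h
          · obtain ⟨m', _, rfl⟩ := Finset.mem_image.mp h
            exact Or.inl ⟨(x, y), (m', y - m' * x), Or.inl ⟨rfl, rfl⟩, by ring⟩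
          · obtain ⟨j, hj, rfl⟩ := Finset.mem_image.mp h
            exact Or.inr (Or.inr ⟨x, y, j, hj, rfl, rfl⟩)
      have hseteq : {u | GtEdge F T1 T2 (Sum.inl (x, y)) u} =
          ((Finset.univ.image fun m : F => (Sum.inr (m, y - m * x) : (F × F) ⊕ (F × F))) ∪
            T2.image fun j => Sum.inl (x, y + j) : Finset _) := by
        exact Set.ext fun u => (hiff u).trans Finset.mem_coe.symm
      have : Nat.card {u // GtEdge F T1 T2 (Sum.inl (x, y)) u} =
          Set.ncard {u | GtEdge F T1 T2 (Sum.inl (x, y)) u} := rfl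
      rw [this, hseteq, Set.ncard_coe_finset]
      rw [Finset.card_union_of_disjoint]
      · rw [Finset.card_image_of_injective, Finset.card_image_of_injective, Finset.card_univ,
          hq, hT2card]
        · intro a c hac
          simp only [Sum.inr.injEq, Sum.inl.injEq, Prod.mk.injEq, eq_self_iff_true,
            true_and, add_right_inj] at hac
          first | exact hac | exact hac.1
        · intro a c hac
          simp only [Sum.inr.injEq, Sum.inl.injEq, Prod.mk.injEq, eq_self_iff_true,
            true_and, add_right_inj] at hac
          first | exact hac | exact hac.1
      · rw [Finset.disjoint_left]
        intro a ha hb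
        obtain ⟨m', _, rfl⟩ := Finset.mem_image.mp ha
        obtain ⟨j, _, h⟩ := Finset.mem_image.mp hb
        exact absurd h (by simp)
    · have hiff : ∀ u : (F × F) ⊕ (F × F), GtEdge F T1 T2 (Sum.inr (m, b)) u ↔
          u ∈ (Finset.univ.image fun x : F => (Sum.inl (x, m * x + b) : (F × F) ⊕ (F × F))) ∪
            T1.image fun i => Sum.inr (m, b + i) := by
        intro u
        constructor
        · rintro (⟨⟨px, py⟩, ⟨lm, lb⟩, (⟨hv, hu⟩ | ⟨hv, hu⟩), hpl⟩ | ⟨m', b', i, hi, hv, hu⟩ |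
            ⟨x', y', j, hj, hv, hu⟩)
          · exact absurd hv (by simp)
          · simp only [Sum.inr.injEq, Prod.mk.injEq] at hv
            obtain ⟨rfl, rfl⟩ := hv
            have hpl' : py = m * px + b := hpl
            refine Finset.mem_union.mpr (Or.inl (Finset.mem_image.mpr ⟨px, Finset.mem_univ _, ?_⟩))
            rw [hu]
            simp only [Sum.inl.injEq, Prod.mk.injEq]
            first
              | exact ⟨trivial, hpl'.symm⟩
              | exact ⟨rfl, hpl'.symm⟩
          · simp only [Sum.inr.injEq, Prod.mk.injEq] at hv
            obtain ⟨rfl, rfl⟩ := hv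
            exact Finset.mem_union.mpr (Or.inr (Finset.mem_image.mpr ⟨i, hi, hu.symm⟩))
          · exact absurd hv (by simp)
        · intro hu
          rcases Finset.mem_union.mp hu with h | h
          · obtain ⟨x', _, rfl⟩ := Finset.mem_image.mp h
            exact Or.inl ⟨(x', m * x' + b), (m, b), Or.inr ⟨rfl, rfl⟩, rfl⟩
          · obtain ⟨i, hi, rfl⟩ := Finset.mem_image.mp h
            exact Or.inr (Or.inl ⟨m, b, i, hi, rfl, rfl⟩)
      have hseteq : {u | GtEdge F T1 T2 (Sum.inr (m, b)) u} =
          ((Finset.univ.image fun x : F => (Sum.inl (x, m * x + b) : (F × F) ⊕ (F × F))) ∪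
            T1.image fun i => Sum.inr (m, b + i) : Finset _) := by
        exact Set.ext fun u => (hiff u).trans Finset.mem_coe.symm
      have : Nat.card {u // GtEdge F T1 T2 (Sum.inr (m, b)) u} =
          Set.ncard {u | GtEdge F T1 T2 (Sum.inr (m, b)) u} := rfl
      rw [this, hseteq, Set.ncard_coe_finset]
      rw [Finset.card_union_of_disjoint]
      · rw [Finset.card_image_of_injective, Finset.card_image_of_injective, Finset.card_univ,
          hq, hT1card]
        · intro a c hac
          simp only [Sum.inr.injEq, Sum.inl.injEq, Prod.mk.injEq, eq_self_iff_true,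
            true_and, add_right_inj] at hac
          first | exact hac | exact hac.1
        · intro a c hac
          simp only [Sum.inr.injEq, Sum.inl.injEq, Prod.mk.injEq, eq_self_iff_true,
            true_and, add_right_inj] at hac
          first | exact hac | exact hac.1
      · rw [Finset.disjoint_left]
        intro a ha hb
        obtain ⟨x', _, rfl⟩ := Finset.mem_image.mp ha
        obtain ⟨i, _, h⟩ := Finset.mem_image.mp hb
        exact absurd h (by simp)
  · -- directed degree
    rintro (⟨x, y⟩ | ⟨m, b⟩)
    · have hiff : ∀ u : (F × F) ⊕ (F × F), GtArc F S (Sum.inl (x, y)) u ↔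
          u ∈ S.image fun s => (Sum.inl (x, y + -s) : (F × F) ⊕ (F × F)) := by
        intro u
        constructor
        · rintro (⟨m', b', i, hi, hv, hu⟩ | ⟨x', y', j, hj, hv, hu⟩)
          · exact absurd hv (by simp)
          · simp only [Sum.inl.injEq, Prod.mk.injEq] at hv
            obtain ⟨rfl, rfl⟩ := hv
            refine Finset.mem_image.mpr ⟨-j, hj, ?_⟩
            rw [hu]
            simp only [Sum.inl.injEq, Prod.mk.injEq]
            first
              | exact ⟨trivial, by ring⟩
              | exact ⟨rfl, by ring⟩
        · intro hu
          obtain ⟨s, hs, rfl⟩ := Finset.mem_image.mp hu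
          exact Or.inr ⟨x, y, -s, by simpa using hs, rfl, rfl⟩
      have hseteq : {u | GtArc F S (Sum.inl (x, y)) u} =
          (S.image fun s => (Sum.inl (x, y + -s) : (F × F) ⊕ (F × F)) : Finset _) := by
        exact Set.ext fun u => (hiff u).trans Finset.mem_coe.symm
      have : Nat.card {u // GtArc F S (Sum.inl (x, y)) u} =
          Set.ncard {u | GtArc F S (Sum.inl (x, y)) u} := rfl
      rw [this, hseteq, Set.ncard_coe_finset, Finset.card_image_of_injective, hScard]
      intro a c hac
      have h1 : y + -a = y + -c := by simpa using hac
      have := add_left_cancel h1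
      exact neg_injective this
    · have hiff : ∀ u : (F × F) ⊕ (F × F), GtArc F S (Sum.inr (m, b)) u ↔
          u ∈ S.image fun i => (Sum.inr (m, b + i) : (F × F) ⊕ (F × F)) := by
        intro u
        constructor
        · rintro (⟨m', b', i, hi, hv, hu⟩ | ⟨x', y', j, hj, hv, hu⟩)
          · simp only [Sum.inr.injEq, Prod.mk.injEq] at hv
            obtain ⟨rfl, rfl⟩ := hv
            exact Finset.mem_image.mpr ⟨i, hi, hu.symm⟩
          · exact absurd hv (by simp)
        · intro hu
          obtain ⟨i, hi, rfl⟩ := Finset.mem_image.mp hu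
          exact Or.inl ⟨m, b, i, hi, rfl, rfl⟩
      have hseteq : {u | GtArc F S (Sum.inr (m, b)) u} =
          (S.image fun i => (Sum.inr (m, b + i) : (F × F) ⊕ (F × F)) : Finset _) := by
        exact Set.ext fun u => (hiff u).trans Finset.mem_coe.symm
      have : Nat.card {u // GtArc F S (Sum.inr (m, b)) u} =
          Set.ncard {u | GtArc F S (Sum.inr (m, b)) u} := rfl
      rw [this, hseteq, Set.ncard_coe_finset, Finset.card_image_of_injective, hScard]
      intro a c hac
      have h1 : b + a = b + c := by simpa using hac
      exact add_left_cancel h1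
end
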